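/- The Scott space ΣP₁ of the dcpo P₁ = (ℕ^ℕ × ℕ) ∪ B ∪ {⊤₁} described in the context is sober. -/

import Mathlib

/-- A subset `D` is directed with respect to the relation `le`:
it is nonempty and any two elements have an upper bound in `D`. -/
def DirectedOn' {α : Type*} (le : α → α → Prop) (D : Set α) : Prop :=
  D.Nonempty ∧ ∀ x ∈ D, ∀ y ∈ D, ∃ z ∈ D, le x z ∧ le y z

/-- `u` is a least upper bound of `D` with respect to the relation `le`. -/
def IsLub' {α : Type*} (le : α → α → Prop) (D : Set α) (u : α) : Prop :=
  (∀ x ∈ D, le x u) ∧ ∀ v, (∀ x ∈ D, le x v) → le u v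

/-- Every directed subset has a least upper bound: `le` makes the carrier a dcpo. -/
def IsDcpoRel {α : Type*} (le : α → α → Prop) : Prop :=
  ∀ D : Set α, DirectedOn' le D → ∃ u, IsLub' le D u

/-- `U` is Scott open with respect to `le`: it is an upper set and every directed subset
whose least upper bound lies in `U` meets `U`. -/
def ScottOpen' {α : Type*} (le : α → α → Prop) (U : Set α) : Prop :=
  (∀ x y, le x y → x ∈ U → y ∈ U) ∧
    ∀ D u, DirectedOn' le D → IsLub' le D u → u ∈ U → (D ∩ U).Nonempty

/-- `A` is Scott closed with respect to `le`: it is a lower set and contains the least upper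
bounds of its directed subsets. -/
def ScottClosed' {α : Type*} (le : α → α → Prop) (A : Set α) : Prop :=
  (∀ x y, le x y → y ∈ A → x ∈ A) ∧
    ∀ D u, D ⊆ A → DirectedOn' le D → IsLub' le D u → u ∈ A

/-- Sobriety of the Scott space of `le`: the space is T₀ and every irreducible Scott closed
subset is the Scott closure `↓x = {y | le y x}` of a unique point `x`. -/
def SoberRel {α : Type*} (le : α → α → Prop) : Prop :=
  (∀ x y : α, (∀ U : Set α, ScottOpen' le U → (x ∈ U ↔ y ∈ U)) → x = y) ∧
    ∀ C : Set α, ScottClosed' le C → C.Nonempty →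
      (∀ A B : Set α, ScottClosed' le A → ScottClosed' le B → C ⊆ A ∪ B → C ⊆ A ∨ C ⊆ B) →
      ∃! x : α, C = {y | le y x}

/-! ### The posets `M`, `L`, `B`, `P₁`, `P₂` of Miao, Xi, Jia, Li, Zhao -/

/-- `ℕ^{<ℕ}`: nonempty finite words over `ℕ`. -/
abbrev NWord : Type := {l : List ℕ // l ≠ []}

/-- The prefix order on nonempty finite words. -/
def wordLE (v w : NWord) : Prop := v.1 <+: w.1

/-- The word of length 1 corresponding to a natural number. -/
def word1 (k : ℕ) : NWord := ⟨[k], by simp⟩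

/-- `s.k`: the word `s` extended by the letter `k`. -/
def wordSnoc (s : NWord) (k : ℕ) : NWord := ⟨s.1 ++ [k], by simp⟩

/-- The poset `M = ℕ ⊔ ℕ^{<ℕ}`, the disjoint sum of `ℕ` and the words. -/
abbrev Mt : Type := ℕ ⊕ NWord

/-- The (disjoint sum) order on `M`. -/
def Mle : Mt → Mt → Prop
  | Sum.inl a, Sum.inl b => a ≤ b
  | Sum.inr v, Sum.inr w => wordLE v w
  | _, _ => False

/-- The strict order on `M`. -/
def Mlt (x y : Mt) : Prop := Mle x y ∧ x ≠ y

/-- Pairs `(a, b)` of naturals with `a < b`. -/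
abbrev Pairt : Type := {p : ℕ × ℕ // p.1 < p.2}

/-- The poset `L = ({(a,b) : a < b} × M) ∪ {⊤}`; `none` is the top element `⊤` and
`some (p, x)` is the element `x_{a,b}` for `p = (a,b)`. -/
abbrev Lt : Type := Option (Pairt × Mt)

/-- The strict order on `L`: everything (other than `⊤`) is strictly below `⊤ = none`, and
`x_{a,b} < y_{a,b}` iff `x < y` in `M` (with the same tag `(a,b)`). -/
def Llt (u v : Lt) : Prop :=
  (u ≠ none ∧ v = none) ∨ ∃ p x y, u = some (p, x) ∧ v = some (p, y) ∧ Mlt x y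

/-- The carrier of the poset `B = ℕ × ℕ × L`. -/
abbrev Bt : Type := ℕ × ℕ × Lt

/-- `⊏₁`: `(m, n, ℓ) ⊏₁ (m, n, ℓ')` whenever `ℓ < ℓ'` in `L`. -/
def sq1 : Bt → Bt → Prop := fun x y =>
  ∃ m n u v, x = (m, n, u) ∧ y = (m, n, v) ∧ Llt u v

/-- `⊏₂`: `(a, n, x_{a,b}) ⊏₂ (f_{a,b}(x), n+1, ⊤)` for a word `x ∈ ℕ^{<ℕ}`. -/
def sq2 (f : Pairt → NWord → ℕ) : Bt → Bt → Prop := fun x y =>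
  ∃ (n : ℕ) (p : Pairt) (w : NWord),
    x = (p.1.1, n, some (p, Sum.inr w)) ∧ y = (f p w, n + 1, (none : Lt))

/-- `⊏₃`: `(b, n, x_{a,b}) ⊏₃ (f_{a,b}(x), n+1, ⊤)` for `x ∈ ℕ`, regarded as a word of
length 1. -/
def sq3 (f : Pairt → NWord → ℕ) : Bt → Bt → Prop := fun x y =>
  ∃ (n k : ℕ) (p : Pairt),
    x = (p.1.2, n, some (p, Sum.inl k)) ∧ y = (f p (word1 k), n + 1, (none : Lt))

/-- `⊏₄`: `(f_{a,b}(s), n, x_{a,b}) ⊏₄ (f_{a,b}(s.x), n, ⊤)` for a word `s` and `x ∈ ℕ`. -/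
def sq4 (f : Pairt → NWord → ℕ) : Bt → Bt → Prop := fun x y =>
  ∃ (n k : ℕ) (p : Pairt) (s : NWord),
    x = (f p s, n, some (p, Sum.inl k)) ∧ y = (f p (wordSnoc s k), n, (none : Lt))

/-- `⊏ = ⊏₁ ∪ ⊏₂ ∪ ⊏₃ ∪ ⊏₄ ∪ ⊏₁;⊏₂ ∪ ⊏₁;⊏₃ ∪ ⊏₁;⊏₄`. -/
def Bsq (f : Pairt → NWord → ℕ) : Bt → Bt → Prop := fun x y =>
  sq1 x y ∨ sq2 f x y ∨ sq3 f x y ∨ sq4 f x y ∨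
    (∃ z, sq1 x z ∧ sq2 f z y) ∨ (∃ z, sq1 x z ∧ sq3 f z y) ∨ (∃ z, sq1 x z ∧ sq4 f z y)

/-- The order `⊑` on `B`: the reflexive closure of `⊏`. -/
def Ble (f : Pairt → NWord → ℕ) (x y : Bt) : Prop := x = y ∨ Bsq f x y

/-- The hypotheses on the data `i`, `f`: `i` is an injection into `P(ℕ)` with pairwise
disjoint values satisfying `n < k` for all `k ∈ i (m, n)`, and each `f_{a,b}` is a monotone
injection of `ℕ^{<ℕ}` (with the prefix order) into `i (a, b)`. -/
structure IFData (i : Pairt → Set ℕ) (f : Pairt → NWord → ℕ) : Prop where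
  inj : Function.Injective i
  disj : ∀ p q : Pairt, p ≠ q → i p ∩ i q = ∅
  gt : ∀ p : Pairt, ∀ k ∈ i p, p.1.2 < k
  mem : ∀ p w, f p w ∈ i p
  finj : ∀ p, Function.Injective (f p)
  fmono : ∀ p v w, wordLE v w → f p v ≤ f p w

/-- The carrier of the poset `P₁ = (ℕ^ℕ × ℕ) ∪ B ∪ {⊤₁}`. -/
abbrev P1t : Type := ((ℕ → ℕ) × ℕ) ⊕ Bt ⊕ Unit

/-- The top element `⊤₁` of `P₁`. -/
def P1top : P1t := Sum.inr (Sum.inr ())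

/-- The inclusion of `B` into `P₁`. -/
def P1ofB (b : Bt) : P1t := Sum.inr (Sum.inl b)

/-- The strict order `<₁ ∪ <₂ ∪ <₃ ∪ <₄ ∪ <₁;<₃` of `P₁`:
`(g, n) <₁ (g, m)` iff `n < m`; `<₂` is `⊏` on `B`; `(g, n) <₃ (g(n), n, ⊤)`;
`x <₄ ⊤₁` for `x ≠ ⊤₁`; and `(g, n) <₁;<₃ (g(m), m, ⊤)` for `n < m`. -/
def P1lt (f : Pairt → NWord → ℕ) : P1t → P1t → Prop := fun x y =>
  (∃ (g : ℕ → ℕ) (n m : ℕ), x = Sum.inl (g, n) ∧ y = Sum.inl (g, m) ∧ n < m) ∨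
  (∃ b c : Bt, x = P1ofB b ∧ y = P1ofB c ∧ Bsq f b c) ∨
  (∃ (g : ℕ → ℕ) (n : ℕ), x = Sum.inl (g, n) ∧ y = P1ofB (g n, n, (none : Lt))) ∨
  (x ≠ P1top ∧ y = P1top) ∨
  (∃ (g : ℕ → ℕ) (n m : ℕ), x = Sum.inl (g, n) ∧ n < m ∧ y = P1ofB (g m, m, (none : Lt)))

/-- The order of `P₁`: the reflexive closure of the strict order. -/
def P1le (f : Pairt → NWord → ℕ) (x y : P1t) : Prop := x = y ∨ P1lt f x y

/-! ### Auxiliary development -/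

section AuxDev
open Sum

/-! #### words -/

lemma wordLE_rfl {v : NWord} : wordLE v v := List.prefix_rfl

lemma wordLE_trans {u v w : NWord} (h1 : wordLE u v) (h2 : wordLE v w) : wordLE u w :=
  List.IsPrefix.trans h1 h2

lemma wordLE_antisymm {u v : NWord} (h1 : wordLE u v) (h2 : wordLE v u) : u = v :=
  Subtype.ext (List.IsPrefix.eq_of_length h1
    (le_antisymm (List.IsPrefix.length_le h1) (List.IsPrefix.length_le h2)))

lemma wordLE_length {u v : NWord} (h : wordLE u v) : u.1.length ≤ v.1.length :=
  List.IsPrefix.length_le h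

lemma wordLE_snoc {s : NWord} {j : ℕ} : wordLE s (wordSnoc s j) :=
  List.prefix_append _ _

lemma word1_inj {j j' : ℕ} (h : word1 j = word1 j') : j = j' := by
  have := congrArg (fun w : NWord => w.1) h
  simpa [word1] using this

lemma wordSnoc_inj {s s' : NWord} {j j' : ℕ} (h : wordSnoc s j = wordSnoc s' j') :
    s = s' ∧ j = j' := by
  have h1 : s.1 ++ [j] = s'.1 ++ [j'] := congrArg (fun w : NWord => w.1) h
  have hlen : s.1.length = s'.1.length := by
    have := congrArg List.length h1
    simpa using this
  obtain ⟨hs, hj⟩ := List.append_inj h1 hlen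
  exact ⟨Subtype.ext hs, by simpa using hj⟩

lemma wordSnoc_length {s : NWord} {j : ℕ} : (wordSnoc s j).1.length = s.1.length + 1 := by
  simp [wordSnoc]

lemma word1_length {j : ℕ} : (word1 j).1.length = 1 := by simp [word1]

lemma wordLE_comparable {u v w : NWord} (h1 : wordLE u w) (h2 : wordLE v w) :
    wordLE u v ∨ wordLE v u :=
  List.prefix_or_prefix_of_prefix h1 h2

lemma wordSnoc_le_snoc {s : NWord} {j j' : ℕ} (h : wordLE (wordSnoc s j) (wordSnoc s j')) :
    j = j' := by
  have hlen : (wordSnoc s j).1.length = (wordSnoc s j').1.length := by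
    simp [wordSnoc_length]
  have := List.IsPrefix.eq_of_length h hlen
  exact (wordSnoc_inj (Subtype.ext this)).2

/-! #### M -/

lemma Mle_refl (x : Mt) : Mle x x := by
  cases x with
  | inl a => simp [Mle]
  | inr v => exact wordLE_rfl

lemma Mle_trans {x y z : Mt} (h1 : Mle x y) (h2 : Mle y z) : Mle x z := by
  cases x <;> cases y <;> cases z <;> simp [Mle] at * <;> try exact le_trans h1 h2
  exact wordLE_trans h1 h2

lemma Mle_antisymm {x y : Mt} (h1 : Mle x y) (h2 : Mle y x) : x = y := by
  cases x <;> cases y <;> simp [Mle] at *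
  · exact le_antisymm h1 h2
  · exact wordLE_antisymm h1 h2

lemma Mlt_trans {x y z : Mt} (h1 : Mlt x y) (h2 : Mlt y z) : Mlt x z := by
  refine ⟨Mle_trans h1.1 h2.1, ?_⟩
  rintro rfl
  exact h2.2 (Mle_antisymm h2.1 h1.1)

lemma Mle_inl_inv {a : ℕ} {z : Mt} (h : Mle (Sum.inl a) z) : ∃ b, z = Sum.inl b ∧ a ≤ b := by
  cases z with
  | inl b => exact ⟨b, rfl, h⟩
  | inr w => simp [Mle] at h

lemma Mle_inr_inv {v : NWord} {z : Mt} (h : Mle (Sum.inr v) z) :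
    ∃ w, z = Sum.inr w ∧ wordLE v w := by
  cases z with
  | inl b => simp [Mle] at h
  | inr w => exact ⟨w, rfl, h⟩

lemma Mle_inv_inl {a : ℕ} {z : Mt} (h : Mle z (Sum.inl a)) : ∃ b, z = Sum.inl b ∧ b ≤ a := by
  cases z with
  | inl b => exact ⟨b, rfl, h⟩
  | inr w => simp [Mle] at h

lemma Mle_inv_inr {v : NWord} {z : Mt} (h : Mle z (Sum.inr v)) :
    ∃ w, z = Sum.inr w ∧ wordLE w v := by
  cases z with
  | inl b => simp [Mle] at h
  | inr w => exact ⟨w, rfl, h⟩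

/-! #### L -/

lemma Llt_irrefl (u : Lt) : ¬ Llt u u := by
  rintro (⟨hne, rfl⟩ | ⟨p, x, y, h1, h2, hxy⟩)
  · exact hne rfl
  · rw [h1] at h2
    injection h2 with h2
    exact hxy.2 (Prod.ext_iff.mp h2).2

lemma Llt_trans {u v w : Lt} (h1 : Llt u v) (h2 : Llt v w) : Llt u w := by
  rcases h1 with ⟨hu, rfl⟩ | ⟨p, x, y, rfl, rfl, hxy⟩
  · rcases h2 with ⟨hv, rfl⟩ | ⟨p, x, y, h, _, _⟩
    · exact absurd rfl hv
    · exact absurd h (by simp)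
  · rcases h2 with ⟨hv, rfl⟩ | ⟨p', x', y', h, rfl, hyz⟩
    · exact Or.inl ⟨by simp, rfl⟩
    · injection h with h
      obtain ⟨h1, h2⟩ := Prod.ext_iff.mp h
      subst h1; subst h2
      exact Or.inr ⟨p, x, y', rfl, rfl, Mlt_trans hxy hyz⟩

lemma Llt_some_none {p : Pairt} {x : Mt} : Llt (some (p, x)) none :=
  Or.inl ⟨by simp, rfl⟩

lemma Llt_none_inv {v : Lt} (h : Llt none v) : False := by
  rcases h with ⟨hne, _⟩ | ⟨p, x, y, h, _, _⟩
  · exact hne rfl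
  · exact absurd h (by simp)

lemma Llt_some_some_inv {p q : Pairt} {x y : Mt} (h : Llt (some (p, x)) (some (q, y))) :
    p = q ∧ Mlt x y := by
  rcases h with ⟨_, h⟩ | ⟨p', x', y', h1, h2, hxy⟩
  · exact absurd h (by simp)
  · injection h1 with h1; injection h2 with h2
    obtain ⟨ha, hb⟩ := Prod.ext_iff.mp h1
    obtain ⟨hc, hd⟩ := Prod.ext_iff.mp h2
    cases ha; cases hb; cases hc; cases hd
    exact ⟨rfl, hxy⟩

end AuxDev


section AuxDev2
open Sum

/-! #### B -/

lemma bsq_none_src {f : Pairt → NWord → ℕ} {c m : ℕ} {b : Bt}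
    (h : Bsq f (c, m, (none : Lt)) b) : False := by
  have hsq1 : ∀ z : Bt, sq1 (c, m, (none : Lt)) z → False := by
    rintro z ⟨m₁, n₁, u, v, hx, hy, hlt⟩
    obtain ⟨h1, h2, h3⟩ : c = m₁ ∧ m = n₁ ∧ (none : Lt) = u := by simpa using hx
    subst h3
    exact Llt_none_inv hlt
  rcases h with h | h | h | h | ⟨zz, h1, h2⟩ | ⟨zz, h1, h2⟩ | ⟨zz, h1, h2⟩
  · exact hsq1 _ h
  · obtain ⟨n, p, w, hx, hy⟩ := h
    simp at hx
  · obtain ⟨n, k, p, hx, hy⟩ := h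
    simp at hx
  · obtain ⟨n, k, p, s, hx, hy⟩ := h
    simp at hx
  · exact hsq1 _ h1
  · exact hsq1 _ h1
  · exact hsq1 _ h1

lemma sq1_some {c m : ℕ} {q : Pairt} {z z' : Mt} (h : Mlt z z') :
    sq1 (c, m, some (q, z)) (c, m, some (q, z')) :=
  ⟨c, m, some (q, z), some (q, z'), rfl, rfl, Or.inr ⟨q, z, z', rfl, rfl, h⟩⟩

lemma sq1_trans {a b c : Bt} (h1 : sq1 a b) (h2 : sq1 b c) : sq1 a c := by
  obtain ⟨m₁, n₁, u, v, rfl, rfl, hlt⟩ := h1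
  obtain ⟨m₂, n₂, u₂, v₂, hb, rfl, hlt₂⟩ := h2
  obtain ⟨h1, h2, h3⟩ : m₁ = m₂ ∧ n₁ = n₂ ∧ v = u₂ := by simpa using hb
  subst h1; subst h2; subst h3
  exact ⟨m₁, n₁, u, v₂, rfl, rfl, Llt_trans hlt hlt₂⟩

lemma bsq_some_src {f : Pairt → NWord → ℕ} {c m : ℕ} {q : Pairt} {z : Mt} {b : Bt}
    (h : Bsq f (c, m, some (q, z)) b) :
    b = (c, m, (none : Lt)) ∨
    (∃ z', Mlt z z' ∧ b = (c, m, some (q, z'))) ∨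
    (∃ v w, z = Sum.inr v ∧ wordLE v w ∧ c = q.1.1 ∧ b = (f q w, m + 1, (none : Lt))) ∨
    (∃ k j, z = Sum.inl k ∧ k ≤ j ∧ c = q.1.2 ∧ b = (f q (word1 j), m + 1, (none : Lt))) ∨
    (∃ k s j, z = Sum.inl k ∧ k ≤ j ∧ c = f q s ∧ b = (f q (wordSnoc s j), m, (none : Lt))) := by
  have hsq1 : ∀ zz : Bt, sq1 (c, m, some (q, z)) zz →
      zz = (c, m, (none : Lt)) ∨ ∃ z', Mlt z z' ∧ zz = (c, m, some (q, z')) := by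
    rintro zz ⟨m₁, n₁, u, v, hx, rfl, hlt⟩
    obtain ⟨h1, h2, h3⟩ : c = m₁ ∧ m = n₁ ∧ some (q, z) = u := by simpa using hx
    subst h1; subst h2; subst h3
    cases v with
    | none => exact Or.inl rfl
    | some pz =>
      obtain ⟨p', z'⟩ := pz
      obtain ⟨rfl, hmlt⟩ := Llt_some_some_inv hlt
      exact Or.inr ⟨z', hmlt, rfl⟩
  have hsq2 : ∀ zz : Bt, sq1 (c, m, some (q, z)) zz → ∀ bb, sq2 f zz bb →
      (∃ v w, z = Sum.inr v ∧ wordLE v w ∧ c = q.1.1 ∧ bb = (f q w, m + 1, (none : Lt))) := by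
    intro zz hs bb h2
    obtain ⟨n, p, w, rfl, rfl⟩ := h2
    rcases hsq1 _ hs with h | ⟨z', hmlt, h⟩
    · simp at h
    · obtain ⟨h1, h2, h3, h4⟩ : p.1.1 = c ∧ n = m ∧ p = q ∧ Sum.inr w = z' := by simpa using h
      subst h1; subst h2; subst h3; subst h4
      obtain ⟨v, rfl, hle⟩ := Mle_inv_inr hmlt.1
      exact ⟨v, w, rfl, hle, rfl, rfl⟩
  have hsq3 : ∀ zz : Bt, sq1 (c, m, some (q, z)) zz → ∀ bb, sq3 f zz bb →
      (∃ k j, z = Sum.inl k ∧ k ≤ j ∧ c = q.1.2 ∧ bb = (f q (word1 j), m + 1, (none : Lt))) := by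
    intro zz hs bb h2
    obtain ⟨n, j, p, rfl, rfl⟩ := h2
    rcases hsq1 _ hs with h | ⟨z', hmlt, h⟩
    · simp at h
    · obtain ⟨h1, h2, h3, h4⟩ : p.1.2 = c ∧ n = m ∧ p = q ∧ Sum.inl j = z' := by simpa using h
      subst h1; subst h2; subst h3; subst h4
      obtain ⟨k, rfl, hle⟩ := Mle_inv_inl hmlt.1
      exact ⟨k, j, rfl, hle, rfl, rfl⟩
  have hsq4 : ∀ zz : Bt, sq1 (c, m, some (q, z)) zz → ∀ bb, sq4 f zz bb →
      (∃ k s j, z = Sum.inl k ∧ k ≤ j ∧ c = f q s ∧ bb = (f q (wordSnoc s j), m, (none : Lt))) := by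
    intro zz hs bb h2
    obtain ⟨n, j, p, s, rfl, rfl⟩ := h2
    rcases hsq1 _ hs with h | ⟨z', hmlt, h⟩
    · simp at h
    · obtain ⟨h1, h2, h3, h4⟩ : f p s = c ∧ n = m ∧ p = q ∧ Sum.inl j = z' := by simpa using h
      subst h1; subst h2; subst h3; subst h4
      obtain ⟨k, rfl, hle⟩ := Mle_inv_inl hmlt.1
      exact ⟨k, s, j, rfl, hle, rfl, rfl⟩
  have hrefl : sq1 (c, m, some (q, z)) (c, m, some (q, z)) → False := by
    rintro ⟨m₁, n₁, u, v, hx, hy, hlt⟩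
    obtain ⟨h1, h2, h3⟩ : c = m₁ ∧ m = n₁ ∧ some (q, z) = u := by simpa using hx
    obtain ⟨h4, h5, h6⟩ : c = m₁ ∧ m = n₁ ∧ some (q, z) = v := by simpa using hy
    subst h3; subst h6
    obtain ⟨_, h⟩ := Llt_some_some_inv hlt
    exact h.2 rfl
  rcases h with h | h | h | h | ⟨zz, h1, h2⟩ | ⟨zz, h1, h2⟩ | ⟨zz, h1, h2⟩
  · rcases hsq1 _ h with h | h
    · exact Or.inl h
    · exact Or.inr (Or.inl h)
  · obtain ⟨n, p, w, hx, rfl⟩ := h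
    obtain ⟨h1, h2, h3, h4⟩ : c = p.1.1 ∧ m = n ∧ q = p ∧ z = Sum.inr w := by simpa using hx
    subst h1; subst h2; subst h3; subst h4
    exact Or.inr (Or.inr (Or.inl ⟨w, w, rfl, wordLE_rfl, rfl, rfl⟩))
  · obtain ⟨n, k, p, hx, rfl⟩ := h
    obtain ⟨h1, h2, h3, h4⟩ : c = p.1.2 ∧ m = n ∧ q = p ∧ z = Sum.inl k := by simpa using hx
    subst h1; subst h2; subst h3; subst h4
    exact Or.inr (Or.inr (Or.inr (Or.inl ⟨k, k, rfl, le_refl k, rfl, rfl⟩)))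
  · obtain ⟨n, k, p, s, hx, rfl⟩ := h
    obtain ⟨h1, h2, h3, h4⟩ : c = f p s ∧ m = n ∧ q = p ∧ z = Sum.inl k := by simpa using hx
    subst h2; subst h3; subst h4
    exact Or.inr (Or.inr (Or.inr (Or.inr ⟨k, s, k, rfl, le_refl k, h1, rfl⟩)))
  · exact Or.inr (Or.inr (Or.inl (hsq2 _ h1 _ h2)))
  · exact Or.inr (Or.inr (Or.inr (Or.inl (hsq3 _ h1 _ h2))))
  · exact Or.inr (Or.inr (Or.inr (Or.inr (hsq4 _ h1 _ h2))))

lemma bsq_tgt_some {f : Pairt → NWord → ℕ} {c m : ℕ} {q : Pairt} {z : Mt} {b : Bt}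
    (h : Bsq f b (c, m, some (q, z))) :
    ∃ z', Mlt z' z ∧ b = (c, m, some (q, z')) := by
  rcases h with h | h | h | h | ⟨zz, h1, h2⟩ | ⟨zz, h1, h2⟩ | ⟨zz, h1, h2⟩
  · obtain ⟨m₁, n₁, u, v, rfl, hy, hlt⟩ := h
    obtain ⟨h1, h2, h3⟩ : c = m₁ ∧ m = n₁ ∧ some (q, z) = v := by simpa using hy
    subst h1; subst h2; subst h3
    rcases hlt with ⟨_, h⟩ | ⟨p, x, y, rfl, hv, hmlt⟩
    · simp at h
    · obtain ⟨h1, h2⟩ : q = p ∧ z = y := by simpa using hv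
      subst h1; subst h2
      exact ⟨x, hmlt, rfl⟩
  · obtain ⟨n, p, w, _, hy⟩ := h; simp at hy
  · obtain ⟨n, k, p, _, hy⟩ := h; simp at hy
  · obtain ⟨n, k, p, s, _, hy⟩ := h; simp at hy
  · obtain ⟨n, p, w, _, hy⟩ := h2; simp at hy
  · obtain ⟨n, k, p, _, hy⟩ := h2; simp at hy
  · obtain ⟨n, k, p, s, _, hy⟩ := h2; simp at hy

lemma Bsq_trans {f : Pairt → NWord → ℕ} {x y z : Bt}
    (h1 : Bsq f x y) (h2 : Bsq f y z) : Bsq f x z := by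
  obtain ⟨c, m, ℓ⟩ := y
  cases ℓ with
  | none => exact absurd h2 (fun h => bsq_none_src h)
  | some pz =>
    obtain ⟨q, zz⟩ := pz
    obtain ⟨z', hmlt, rfl⟩ := bsq_tgt_some h1
    have hs : sq1 (c, m, some (q, z')) (c, m, some (q, zz)) := sq1_some hmlt
    rcases h2 with h | h | h | h | ⟨w, ha, hb⟩ | ⟨w, ha, hb⟩ | ⟨w, ha, hb⟩
    · exact Or.inl (sq1_trans hs h)
    · exact Or.inr (Or.inr (Or.inr (Or.inr (Or.inl ⟨_, hs, h⟩))))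
    · exact Or.inr (Or.inr (Or.inr (Or.inr (Or.inr (Or.inl ⟨_, hs, h⟩)))))
    · exact Or.inr (Or.inr (Or.inr (Or.inr (Or.inr (Or.inr ⟨_, hs, h⟩)))))
    · exact Or.inr (Or.inr (Or.inr (Or.inr (Or.inl ⟨w, sq1_trans hs ha, hb⟩))))
    · exact Or.inr (Or.inr (Or.inr (Or.inr (Or.inr (Or.inl ⟨w, sq1_trans hs ha, hb⟩)))))
    · exact Or.inr (Or.inr (Or.inr (Or.inr (Or.inr (Or.inr ⟨w, sq1_trans hs ha, hb⟩)))))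

lemma Bsq_irrefl {f : Pairt → NWord → ℕ} {x : Bt} (h : Bsq f x x) : False := by
  obtain ⟨c, m, ℓ⟩ := x
  cases ℓ with
  | none => exact bsq_none_src h
  | some pz =>
    obtain ⟨q, z⟩ := pz
    rcases bsq_some_src h with h | ⟨z', hmlt, h⟩ | ⟨v, w, _, _, _, h⟩ |
        ⟨k, j, _, _, _, h⟩ | ⟨k, s, j, _, _, _, h⟩
    · simp at h
    · obtain ⟨h1, h2⟩ : z' = z ∧ True := by
        constructor
        · have : some (q, z) = some (q, z') := by
            have := (Prod.ext_iff.mp h).2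
            simpa using (Prod.ext_iff.mp this).2
          symm; simpa using this
        · trivial
      subst h1
      exact hmlt.2 rfl
    · simp at h
    · simp at h
    · simp at h

/-! #### P1 basics -/

def topB (c m : ℕ) : P1t := P1ofB (c, m, (none : Lt))

def fibE (c m : ℕ) (q : Pairt) (z : Mt) : P1t := P1ofB (c, m, some (q, z))

lemma topB_inj {c m c' m' : ℕ} (h : topB c m = topB c' m') : c = c' ∧ m = m' := by
  simpa [topB, P1ofB] using h

lemma fibE_inj {c m c' m' : ℕ} {q q' : Pairt} {z z' : Mt}
    (h : fibE c m q z = fibE c' m' q' z') : c = c' ∧ m = m' ∧ q = q' ∧ z = z' := by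
  simpa [fibE, P1ofB] using h

lemma P1le_refl {f : Pairt → NWord → ℕ} (x : P1t) : P1le f x x := Or.inl rfl

lemma P1le_top {f : Pairt → NWord → ℕ} (x : P1t) : P1le f x P1top := by
  by_cases h : x = P1top
  · exact Or.inl h
  · exact Or.inr (Or.inr (Or.inr (Or.inr (Or.inl ⟨h, rfl⟩))))

lemma p1lt_top_src {f : Pairt → NWord → ℕ} {y : P1t} (h : P1lt f P1top y) : False := by
  rcases h with ⟨g, n, m, hx, _, _⟩ | ⟨b, c, hx, _, _⟩ | ⟨g, n, hx, _⟩ | ⟨hx, _⟩ |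
      ⟨g, n, m, hx, _, _⟩
  · simp [P1top] at hx
  · simp [P1top, P1ofB] at hx
  · simp [P1top] at hx
  · exact hx rfl
  · simp [P1top] at hx

lemma p1lt_inl_src {f : Pairt → NWord → ℕ} {g : ℕ → ℕ} {n : ℕ} {y : P1t}
    (h : P1lt f (Sum.inl (g, n)) y) :
    (∃ m, n < m ∧ y = Sum.inl (g, m)) ∨ (∃ m, n ≤ m ∧ y = topB (g m) m) ∨ y = P1top := by
  rcases h with ⟨g', n', m', hx, hy, hlt⟩ | ⟨b, c, hx, _, _⟩ | ⟨g', n', hx, hy⟩ | ⟨_, hy⟩ |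
      ⟨g', n', m', hx, hlt, hy⟩
  · obtain ⟨h1, h2⟩ : g = g' ∧ n = n' := by simpa using hx
    subst h1; subst h2
    exact Or.inl ⟨m', hlt, hy⟩
  · simp [P1ofB] at hx
  · obtain ⟨h1, h2⟩ : g = g' ∧ n = n' := by simpa using hx
    subst h1; subst h2
    exact Or.inr (Or.inl ⟨n, le_refl n, hy⟩)
  · exact Or.inr (Or.inr hy)
  · obtain ⟨h1, h2⟩ : g = g' ∧ n = n' := by simpa using hx
    subst h1; subst h2
    exact Or.inr (Or.inl ⟨m', le_of_lt hlt, hy⟩)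

lemma p1lt_inl_tgt {f : Pairt → NWord → ℕ} {g : ℕ → ℕ} {n : ℕ} {x : P1t}
    (h : P1lt f x (Sum.inl (g, n))) : ∃ k, k < n ∧ x = Sum.inl (g, k) := by
  rcases h with ⟨g', n', m', hx, hy, hlt⟩ | ⟨b, c, _, hy, _⟩ | ⟨g', n', _, hy⟩ | ⟨_, hy⟩ |
      ⟨g', n', m', _, _, hy⟩
  · obtain ⟨h1, h2⟩ : g = g' ∧ n = m' := by simpa using hy
    subst h1; subst h2
    exact ⟨n', hlt, hx⟩
  · simp [P1ofB] at hy
  · simp [P1ofB] at hy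
  · simp [P1top] at hy
  · simp [P1ofB] at hy

lemma p1lt_B_src {f : Pairt → NWord → ℕ} {b : Bt} {y : P1t} (h : P1lt f (P1ofB b) y) :
    (∃ c', y = P1ofB c' ∧ Bsq f b c') ∨ y = P1top := by
  rcases h with ⟨g, n, m, hx, _, _⟩ | ⟨b', c', hx, hy, hsq⟩ | ⟨g, n, hx, _⟩ | ⟨_, hy⟩ |
      ⟨g, n, m, hx, _, _⟩
  · simp [P1ofB] at hx
  · obtain h1 : b = b' := by simpa [P1ofB] using hx
    subst h1
    exact Or.inl ⟨c', hy, hsq⟩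
  · simp [P1ofB] at hx
  · exact Or.inr hy
  · simp [P1ofB] at hx

lemma p1lt_B_tgt {f : Pairt → NWord → ℕ} {b : Bt} {x : P1t} (h : P1lt f x (P1ofB b)) :
    (∃ b', x = P1ofB b' ∧ Bsq f b' b) ∨
    (∃ g n m, n ≤ m ∧ x = Sum.inl (g, n) ∧ b = (g m, m, (none : Lt))) := by
  rcases h with ⟨g, n, m, _, hy, _⟩ | ⟨b', c', hx, hy, hsq⟩ | ⟨g, n, hx, hy⟩ | ⟨_, hy⟩ |
      ⟨g, n, m, hx, hlt, hy⟩
  · simp [P1ofB] at hy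
  · obtain h1 : b = c' := by simpa [P1ofB] using hy
    subst h1
    exact Or.inl ⟨b', hx, hsq⟩
  · obtain h1 : b = (g n, n, (none : Lt)) := by simpa [P1ofB] using hy
    exact Or.inr ⟨g, n, n, le_refl n, hx, h1⟩
  · simp [P1top, P1ofB] at hy
  · obtain h1 : b = (g m, m, (none : Lt)) := by simpa [P1ofB] using hy
    exact Or.inr ⟨g, n, m, le_of_lt hlt, hx, h1⟩

lemma P1lt_irrefl {f : Pairt → NWord → ℕ} {x : P1t} (h : P1lt f x x) : False := by
  rcases h with ⟨g, n, m, hx, hy, hlt⟩ | ⟨b, c, hx, hy, hsq⟩ | ⟨g, n, hx, hy⟩ | ⟨hx, hy⟩ |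
      ⟨g, n, m, hx, hlt, hy⟩
  · rw [hx] at hy
    obtain ⟨_, h2⟩ : g = g ∧ n = m := by simpa using hy
    omega
  · rw [hx] at hy
    obtain h1 : b = c := by simpa [P1ofB] using hy
    subst h1
    exact Bsq_irrefl hsq
  · rw [hx] at hy; simp [P1ofB] at hy
  · exact hx hy
  · rw [hx] at hy; simp [P1ofB] at hy

lemma P1lt_trans {f : Pairt → NWord → ℕ} {x y z : P1t}
    (h1 : P1lt f x y) (h2 : P1lt f y z) : P1lt f x z := by
  rcases h1 with ⟨g, n, m, rfl, rfl, hlt⟩ | ⟨b, c, rfl, rfl, hsq⟩ | ⟨g, n, rfl, rfl⟩ |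
      ⟨hx, rfl⟩ | ⟨g, n, m, rfl, hlt, rfl⟩
  · rcases p1lt_inl_src h2 with ⟨m₂, hlt₂, rfl⟩ | ⟨m₂, hle₂, rfl⟩ | rfl
    · exact Or.inl ⟨g, n, m₂, rfl, rfl, lt_trans hlt hlt₂⟩
    · exact Or.inr (Or.inr (Or.inr (Or.inr ⟨g, n, m₂, rfl, lt_of_lt_of_le hlt hle₂, rfl⟩)))
    · exact Or.inr (Or.inr (Or.inr (Or.inl ⟨by simp [P1top], rfl⟩)))
  · rcases p1lt_B_src h2 with ⟨c', rfl, hsq₂⟩ | rfl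
    · exact Or.inr (Or.inl ⟨b, c', rfl, rfl, Bsq_trans hsq hsq₂⟩)
    · exact Or.inr (Or.inr (Or.inr (Or.inl ⟨by simp [P1top, P1ofB], rfl⟩)))
  · rcases p1lt_B_src h2 with ⟨c', rfl, hsq₂⟩ | rfl
    · exact absurd hsq₂ (fun h => bsq_none_src h)
    · exact Or.inr (Or.inr (Or.inr (Or.inl ⟨by simp [P1top], rfl⟩)))
  · exact absurd h2 p1lt_top_src
  · rcases p1lt_B_src h2 with ⟨c', rfl, hsq₂⟩ | rfl
    · exact absurd hsq₂ (fun h => bsq_none_src h)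
    · exact Or.inr (Or.inr (Or.inr (Or.inl ⟨by simp [P1top], rfl⟩)))

lemma P1le_trans {f : Pairt → NWord → ℕ} {x y z : P1t}
    (h1 : P1le f x y) (h2 : P1le f y z) : P1le f x z := by
  rcases h1 with rfl | h1
  · exact h2
  rcases h2 with rfl | h2
  · exact Or.inr h1
  · exact Or.inr (P1lt_trans h1 h2)

lemma P1le_antisymm {f : Pairt → NWord → ℕ} {x y : P1t}
    (h1 : P1le f x y) (h2 : P1le f y x) : x = y := by
  rcases h1 with rfl | h1
  · rfl
  rcases h2 with rfl | h2
  · rfl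
  · exact absurd (P1lt_trans h1 h2) (fun h => P1lt_irrefl h)

end AuxDev2


section AuxDev3
open Sum

variable {f : Pairt → NWord → ℕ}

lemma top_le_inv {x : P1t} (h : P1le f P1top x) : x = P1top := by
  rcases h with rfl | h
  · rfl
  · exact absurd h p1lt_top_src

lemma le_inl_inv {g : ℕ → ℕ} {n : ℕ} {x : P1t} (h : P1le f x (Sum.inl (g, n))) :
    ∃ k, k ≤ n ∧ x = Sum.inl (g, k) := by
  rcases h with rfl | h
  · exact ⟨n, le_refl n, rfl⟩
  · obtain ⟨k, hk, rfl⟩ := p1lt_inl_tgt h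
    exact ⟨k, le_of_lt hk, rfl⟩

lemma le_fibE_inv {c m : ℕ} {q : Pairt} {z : Mt} {x : P1t}
    (h : P1le f x (fibE c m q z)) : ∃ z', Mle z' z ∧ x = fibE c m q z' := by
  rcases h with rfl | h
  · exact ⟨z, Mle_refl z, rfl⟩
  · rcases p1lt_B_tgt h with ⟨b', rfl, hsq⟩ | ⟨g, n, m', _, rfl, hb⟩
    · obtain ⟨z', hmlt, rfl⟩ := bsq_tgt_some hsq
      exact ⟨z', hmlt.1, rfl⟩
    · simp at hb

lemma fibE_src_inv {c m : ℕ} {q : Pairt} {z : Mt} {y : P1t}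
    (h : P1le f (fibE c m q z) y) :
    y = fibE c m q z ∨
    (∃ z', Mlt z z' ∧ y = fibE c m q z') ∨
    y = topB c m ∨
    (∃ v w, z = Sum.inr v ∧ wordLE v w ∧ c = q.1.1 ∧ y = topB (f q w) (m + 1)) ∨
    (∃ k j, z = Sum.inl k ∧ k ≤ j ∧ c = q.1.2 ∧ y = topB (f q (word1 j)) (m + 1)) ∨
    (∃ k s j, z = Sum.inl k ∧ k ≤ j ∧ c = f q s ∧ y = topB (f q (wordSnoc s j)) m) ∨
    y = P1top := by
  rcases h with rfl | h
  · exact Or.inl rfl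
  rcases p1lt_B_src h with ⟨c', rfl, hsq⟩ | rfl
  · rcases bsq_some_src hsq with rfl | ⟨z', hmlt, rfl⟩ | ⟨v, w, hz, hle, hc, rfl⟩ |
        ⟨k, j, hz, hle, hc, rfl⟩ | ⟨k, s, j, hz, hle, hc, rfl⟩
    · exact Or.inr (Or.inr (Or.inl rfl))
    · exact Or.inr (Or.inl ⟨z', hmlt, rfl⟩)
    · exact Or.inr (Or.inr (Or.inr (Or.inl ⟨v, w, hz, hle, hc, rfl⟩)))
    · exact Or.inr (Or.inr (Or.inr (Or.inr (Or.inl ⟨k, j, hz, hle, hc, rfl⟩))))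
    · exact Or.inr (Or.inr (Or.inr (Or.inr (Or.inr (Or.inl ⟨k, s, j, hz, hle, hc, rfl⟩)))))
  · exact Or.inr (Or.inr (Or.inr (Or.inr (Or.inr (Or.inr rfl)))))

lemma topB_le_inv {c m : ℕ} {y : P1t} (h : P1le f (topB c m) y) :
    y = topB c m ∨ y = P1top := by
  rcases h with rfl | h
  · exact Or.inl rfl
  rcases p1lt_B_src h with ⟨c', rfl, hsq⟩ | rfl
  · exact absurd hsq (fun hh => bsq_none_src hh)
  · exact Or.inr rfl

lemma topB_le_topB {c m c' m' : ℕ} (h : P1le f (topB c m) (topB c' m')) :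
    c = c' ∧ m = m' := by
  rcases topB_le_inv h with h | h
  · exact topB_inj h.symm
  · exact absurd h (by simp [topB, P1ofB, P1top])

lemma topB_le_fibE {c m c' m' : ℕ} {q : Pairt} {z : Mt}
    (h : P1le f (topB c m) (fibE c' m' q z)) : False := by
  rcases topB_le_inv h with h | h
  · exact absurd h (by simp [topB, fibE, P1ofB])
  · exact absurd h (by simp [fibE, P1ofB, P1top])

lemma topB_le_inl {c m : ℕ} {g : ℕ → ℕ} {n : ℕ}
    (h : P1le f (topB c m) (Sum.inl (g, n))) : False := by
  rcases topB_le_inv h with h | h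
  · exact absurd h (by simp [topB, P1ofB])
  · exact absurd h (by simp [P1top])

lemma top_le_topB {c m : ℕ} (h : P1le f P1top (topB c m)) : False := by
  have := top_le_inv h
  simp [topB, P1ofB, P1top] at this

lemma fibE_le_topB_inv {c' m' c m : ℕ} {q : Pairt} {z : Mt}
    (h : P1le f (fibE c' m' q z) (topB c m)) :
    (c' = c ∧ m' = m) ∨
    (∃ v w, z = Sum.inr v ∧ wordLE v w ∧ c' = q.1.1 ∧ c = f q w ∧ m = m' + 1) ∨
    (∃ k j, z = Sum.inl k ∧ k ≤ j ∧ c' = q.1.2 ∧ c = f q (word1 j) ∧ m = m' + 1) ∨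
    (∃ k s j, z = Sum.inl k ∧ k ≤ j ∧ c' = f q s ∧ c = f q (wordSnoc s j) ∧ m = m') := by
  rcases fibE_src_inv h with h | ⟨z', _, h⟩ | h | ⟨v, w, hz, hle, hc, h⟩ |
      ⟨k, j, hz, hle, hc, h⟩ | ⟨k, s, j, hz, hle, hc, h⟩ | h
  · exact absurd h (by simp [topB, fibE, P1ofB])
  · exact absurd h (by simp [topB, fibE, P1ofB])
  · obtain ⟨h1, h2⟩ := topB_inj h.symm
    exact Or.inl ⟨h1, h2⟩
  · obtain ⟨h1, h2⟩ := topB_inj h.symm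
    exact Or.inr (Or.inl ⟨v, w, hz, hle, hc, h1.symm, h2.symm⟩)
  · obtain ⟨h1, h2⟩ := topB_inj h.symm
    exact Or.inr (Or.inr (Or.inl ⟨k, j, hz, hle, hc, h1.symm, h2.symm⟩))
  · obtain ⟨h1, h2⟩ := topB_inj h.symm
    exact Or.inr (Or.inr (Or.inr ⟨k, s, j, hz, hle, hc, h1.symm, h2.symm⟩))
  · exact absurd h (by simp [topB, P1ofB, P1top])

lemma inl_le_topB_inv {g : ℕ → ℕ} {k c m : ℕ}
    (h : P1le f (Sum.inl (g, k)) (topB c m)) : k ≤ m ∧ c = g m := by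
  rcases h with h | h
  · exact absurd h (by simp [topB, P1ofB])
  rcases p1lt_B_tgt h with ⟨b', hb, _⟩ | ⟨g', n, m₂, hle, hx, hb⟩
  · simp [P1ofB] at hb
  · obtain ⟨h1, h2⟩ : g = g' ∧ k = n := by simpa using hx
    subst h1; subst h2
    obtain ⟨h3, h4, _⟩ : c = g m₂ ∧ m = m₂ ∧ True := by
      constructor
      · exact (Prod.ext_iff.mp hb).1
      · exact ⟨(Prod.ext_iff.mp (Prod.ext_iff.mp hb).2).1, trivial⟩
    subst h4
    exact ⟨hle, h3⟩

lemma inl_le_fibE {g : ℕ → ℕ} {k c m : ℕ} {q : Pairt} {z : Mt}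
    (h : P1le f (Sum.inl (g, k)) (fibE c m q z)) : False := by
  obtain ⟨z', _, hx⟩ := le_fibE_inv h
  simp [fibE, P1ofB] at hx

lemma fibE_le_inl {g : ℕ → ℕ} {n c m : ℕ} {q : Pairt} {z : Mt}
    (h : P1le f (fibE c m q z) (Sum.inl (g, n))) : False := by
  obtain ⟨k, _, hx⟩ := le_inl_inv h
  simp [fibE, P1ofB] at hx

lemma topB_ne_top {c m : ℕ} : topB c m ≠ P1top := by simp [topB, P1ofB, P1top]
lemma fibE_ne_top {c m : ℕ} {q : Pairt} {z : Mt} : fibE c m q z ≠ P1top := by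
  simp [fibE, P1ofB, P1top]
lemma inl_ne_top {g : ℕ → ℕ} {n : ℕ} : (Sum.inl (g, n) : P1t) ≠ P1top := by simp [P1top]

/-! constructions -/

lemma fibE_le_topB {c m : ℕ} {q : Pairt} {z : Mt} : P1le f (fibE c m q z) (topB c m) :=
  Or.inr (Or.inr (Or.inl ⟨(c, m, some (q, z)), (c, m, none), rfl, rfl,
    Or.inl ⟨c, m, some (q, z), none, rfl, rfl, Llt_some_none⟩⟩))

lemma fibE_mono {c m : ℕ} {q : Pairt} {z z' : Mt} (h : Mle z z') :
    P1le f (fibE c m q z) (fibE c m q z') := by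
  by_cases hz : z = z'
  · exact Or.inl (by rw [hz])
  · exact Or.inr (Or.inr (Or.inl ⟨(c, m, some (q, z)), (c, m, some (q, z')), rfl, rfl,
      Or.inl (sq1_some ⟨h, hz⟩)⟩))

lemma inl_mono {g : ℕ → ℕ} {n m : ℕ} (h : n ≤ m) :
    P1le f (Sum.inl (g, n)) (Sum.inl (g, m)) := by
  rcases lt_or_eq_of_le h with h | rfl
  · exact Or.inr (Or.inl ⟨g, n, m, rfl, rfl, h⟩)
  · exact Or.inl rfl

lemma inl_le_topB {g : ℕ → ℕ} {k m : ℕ} (h : k ≤ m) :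
    P1le f (Sum.inl (g, k)) (topB (g m) m) := by
  rcases lt_or_eq_of_le h with h | rfl
  · exact Or.inr (Or.inr (Or.inr (Or.inr (Or.inr ⟨g, k, m, rfl, h, rfl⟩))))
  · exact Or.inr (Or.inr (Or.inr (Or.inl ⟨g, k, rfl, rfl⟩)))

/-! generic Scott facts -/

lemma closed_down (x₀ : P1t) : ScottClosed' (P1le f) {y | P1le f y x₀} := by
  constructor
  · intro x y hxy hy
    exact P1le_trans hxy hy
  · intro D u hsub hD hu
    exact hu.2 x₀ (fun d hd => hsub hd)

lemma open_compl {α : Type*} {le : α → α → Prop} {A : Set α}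
    (h : ScottClosed' le A) : ScottOpen' le Aᶜ := by
  constructor
  · intro x y hxy hx hy
    exact hx (h.1 x y hxy hy)
  · intro D u hD hu hnu
    by_contra hno
    refine hnu (h.2 D u ?_ hD hu)
    intro d hd
    by_contra hdc
    exact hno ⟨d, hd, hdc⟩

lemma closed_diff {α : Type*} {le : α → α → Prop} {C U : Set α}
    (hC : ScottClosed' le C) (hU : ScottOpen' le U) : ScottClosed' le (C \ U) := by
  constructor
  · intro x y hxy hy
    refine ⟨hC.1 x y hxy hy.1, fun hx => hy.2 (hU.1 x y hxy hx)⟩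
  · intro D u hsub hD hu
    refine ⟨hC.2 D u (fun d hd => (hsub hd).1) hD hu, fun hin => ?_⟩
    obtain ⟨d, hd, hdU⟩ := hU.2 D u hD hu hin
    exact (hsub hd).2 hdU

lemma directed_bound_finset {D : Set P1t} (hD : DirectedOn' (P1le f) D) :
    ∀ s : Finset P1t, ↑s ⊆ D → ∃ d ∈ D, ∀ e ∈ s, P1le f e d := by
  intro s
  classical
  induction s using Finset.induction_on with
  | empty =>
    intro _
    obtain ⟨d, hd⟩ := hD.1
    exact ⟨d, hd, by simp⟩
  | @insert a s ha ih =>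
    intro hsub
    have hsub' : ↑s ⊆ D := by
      intro e he
      exact hsub (by simpa using Or.inr he)
    obtain ⟨d, hd, hb⟩ := ih hsub'
    have haD : a ∈ D := hsub (by simp)
    obtain ⟨w, hw, haw, hdw⟩ := hD.2 a haD d hd
    refine ⟨w, hw, fun e he => ?_⟩
    rcases Finset.mem_insert.mp he with rfl | he
    · exact haw
    · exact P1le_trans (hb e he) hdw

lemma lub_mem_of_finite {D : Set P1t} {u : P1t} (hD : DirectedOn' (P1le f) D)
    (hfin : D.Finite) (hu : IsLub' (P1le f) D u) : u ∈ D := by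
  classical
  obtain ⟨d, hd, hb⟩ := directed_bound_finset hD hfin.toFinset
    (by intro e he; simpa using he)
  have h1 : P1le f u d := hu.2 d (fun e he => hb e (by simpa [hfin.mem_toFinset] using he))
  have h2 : P1le f d u := hu.1 d hd
  rwa [P1le_antisymm h1 h2]

end AuxDev3


section AuxDev4
open Sum

variable {f : Pairt → NWord → ℕ}

lemma nat_unbounded_of_infinite {K : Set ℕ} (hK : K.Infinite) : ∀ n, ∃ k, k ∈ K ∧ n ≤ k := by
  intro n
  by_contra h
  push_neg at h
  exact hK (Set.Finite.subset (Set.finite_Iio n) (fun k hk => by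
    simpa using h k hk))

lemma prefixSet_finite (w : NWord) : {v : NWord | wordLE v w}.Finite := by
  have hsub : {v : NWord | wordLE v w} ⊆
      (fun n => (⟨w.1.take (n + 1), by
        simp [List.take_eq_nil_iff, w.2]⟩ : NWord)) '' Set.Iic w.1.length := by
    intro v hv
    have hlen0 : v.1.length ≠ 0 := by
      simpa [List.length_eq_zero_iff] using v.2
    refine ⟨v.1.length - 1, ?_, ?_⟩
    · have := wordLE_length hv
      simp only [Set.mem_Iic]
      omega
    · apply Subtype.ext
      have hlen : v.1.length - 1 + 1 = v.1.length := by omega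
      simp only [hlen]
      exact (List.prefix_iff_eq_take.mp hv).symm
  exact Set.Finite.subset (Set.Finite.image _ (Set.finite_Iic _)) hsub

lemma Mdown_finite (z : Mt) : {z' : Mt | Mle z' z}.Finite := by
  cases z with
  | inl k =>
    refine Set.Finite.subset (Set.Finite.image Sum.inl (Set.finite_Iic k)) ?_
    intro z' hz'
    obtain ⟨b, rfl, hb⟩ := Mle_inv_inl hz'
    exact ⟨b, hb, rfl⟩
  | inr w =>
    refine Set.Finite.subset (Set.Finite.image Sum.inr (prefixSet_finite w)) ?_
    intro z' hz'
    obtain ⟨v, rfl, hv⟩ := Mle_inv_inr hz'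
    exact ⟨v, hv, rfl⟩

lemma L0 {D : Set P1t} {u : P1t} (hD : DirectedOn' (P1le f) D)
    (hu : IsLub' (P1le f) D u) (hnm : u ∉ D) :
    u = P1top ∨ ∃ c m, u = topB c m := by
  rcases u with ⟨g, n⟩ | ⟨c, m, ℓ⟩ | u
  · exfalso
    have hsub : D ⊆ (fun k => (Sum.inl (g, k) : P1t)) '' Set.Iic n := by
      intro d hd
      obtain ⟨k, hk, rfl⟩ := le_inl_inv (hu.1 d hd)
      exact ⟨k, hk, rfl⟩
    exact hnm (lub_mem_of_finite hD
      (Set.Finite.subset (Set.Finite.image _ (Set.finite_Iic n)) hsub) hu)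
  · cases ℓ with
    | none => exact Or.inr ⟨c, m, rfl⟩
    | some pz =>
      obtain ⟨q, z⟩ := pz
      exfalso
      have hsub : D ⊆ (fun z' => fibE c m q z') '' {z' | Mle z' z} := by
        intro d hd
        obtain ⟨z', hz', rfl⟩ := le_fibE_inv (hu.1 d hd)
        exact ⟨z', hz', rfl⟩
      exact hnm (lub_mem_of_finite hD
        (Set.Finite.subset (Set.Finite.image _ (Mdown_finite z)) hsub) hu)
  · exact Or.inl rfl

lemma L1 {D : Set P1t} {c m : ℕ} (hD : DirectedOn' (P1le f) D)
    (hu : IsLub' (P1le f) D (topB c m)) (hnm : topB c m ∉ D) :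
    ∃ q, ∀ d ∈ D, ∃ z, d = fibE c m q z := by
  have hstep : ∀ d ∈ D,
      (∃ g k, d = Sum.inl (g, k)) ∨ (∃ c' m' q z, d = fibE c' m' q z) := by
    intro d hd
    have hle := hu.1 d hd
    rcases d with ⟨g, k⟩ | ⟨c', m', ℓ⟩ | d
    · exact Or.inl ⟨g, k, rfl⟩
    · cases ℓ with
      | none =>
        obtain ⟨rfl, rfl⟩ := topB_le_topB hle
        exact absurd hd hnm
      | some pz =>
        obtain ⟨q, z⟩ := pz
        exact Or.inr ⟨c', m', q, z, rfl⟩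
    · exact (top_le_topB hle).elim
  have hnoF : ∀ g k, Sum.inl (g, k) ∈ D → False := by
    intro g k hgk
    have hsub : D ⊆ (fun j => (Sum.inl (g, j) : P1t)) '' Set.Iic m := by
      intro e he
      obtain ⟨w, hw, h1, h2⟩ := hD.2 e he (Sum.inl (g, k)) hgk
      rcases hstep w hw with ⟨g', j, rfl⟩ | ⟨c', m', q, z, rfl⟩
      · obtain ⟨k', hk', hEq⟩ := le_inl_inv h2
        obtain ⟨rfl, _⟩ : g = g' ∧ k = k' := by simpa using hEq
        have hj := (inl_le_topB_inv (hu.1 _ hw)).1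
        obtain ⟨j', hj', rfl⟩ := le_inl_inv h1
        exact ⟨j', le_trans hj' hj, rfl⟩
      · exact (inl_le_fibE h2).elim
    exact hnm (lub_mem_of_finite hD
      (Set.Finite.subset (Set.Finite.image _ (Set.finite_Iic m)) hsub) hu)
  obtain ⟨d₀, hd₀⟩ := hD.1
  rcases hstep d₀ hd₀ with ⟨g, k, rfl⟩ | ⟨c₀, m₀, q₀, z₀, rfl⟩
  · exact (hnoF g k hd₀).elim
  have hfib : ∀ d ∈ D, ∃ z, d = fibE c₀ m₀ q₀ z := by
    intro d hd
    obtain ⟨w, hw, h1, h2⟩ := hD.2 d hd _ hd₀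
    rcases hstep w hw with ⟨g, j, rfl⟩ | ⟨c₁, m₁, q₁, z₁, rfl⟩
    · exact (fibE_le_inl h2).elim
    · obtain ⟨z', hz', hEq⟩ := le_fibE_inv h2
      obtain ⟨rfl, rfl, rfl, _⟩ := fibE_inj hEq
      obtain ⟨z'', _, rfl⟩ := le_fibE_inv h1
      exact ⟨z'', rfl⟩
  have hub : ∀ d ∈ D, P1le f d (topB c₀ m₀) := by
    intro d hd
    obtain ⟨z, rfl⟩ := hfib d hd
    exact fibE_le_topB
  obtain ⟨rfl, rfl⟩ := topB_le_topB (hu.2 _ hub)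
  exact ⟨q₀, hfib⟩

lemma lub_inl {i : Pairt → Set ℕ} (hif : IFData i f) {c m : ℕ} {q : Pairt}
    (K : Set ℕ) (hK : ∀ n, ∃ k, k ∈ K ∧ n ≤ k) :
    DirectedOn' (P1le f) {d | ∃ k ∈ K, d = fibE c m q (Sum.inl k)} ∧
    IsLub' (P1le f) {d | ∃ k ∈ K, d = fibE c m q (Sum.inl k)} (topB c m) := by
  constructor
  · constructor
    · obtain ⟨k, hk, _⟩ := hK 0
      exact ⟨_, ⟨k, hk, rfl⟩⟩
    · rintro x ⟨k₁, hk₁, rfl⟩ y ⟨k₂, hk₂, rfl⟩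
      obtain ⟨k₃, hk₃, hge⟩ := hK (max k₁ k₂)
      refine ⟨fibE c m q (Sum.inl k₃), ⟨k₃, hk₃, rfl⟩, ?_, ?_⟩
      · refine fibE_mono ?_
        simp only [Mle]
        omega
      · refine fibE_mono ?_
        simp only [Mle]
        omega
  · constructor
    · rintro x ⟨k, hk, rfl⟩
      exact fibE_le_topB
    · intro v hv
      obtain ⟨k₀, hk₀, _⟩ := hK 0
      have h₀ := hv _ ⟨k₀, hk₀, rfl⟩
      rcases v with ⟨g, n⟩ | ⟨c', m', ℓ⟩ | v
      · exact (fibE_le_inl h₀).elim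
      · cases ℓ with
        | some pz =>
          exfalso
          obtain ⟨q', z'⟩ := pz
          obtain ⟨z'', hz'', hEq⟩ := le_fibE_inv h₀
          obtain ⟨rfl, rfl, rfl, hz⟩ := fibE_inj hEq
          cases z' with
          | inl j =>
            obtain ⟨k', hk', hge⟩ := hK (j + 1)
            obtain ⟨z₃, hz₃, hEq₂⟩ := le_fibE_inv (hv _ ⟨k', hk', rfl⟩)
            obtain ⟨_, _, _, hz₄⟩ := fibE_inj hEq₂
            rw [← hz₄] at hz₃
            simp only [Mle] at hz₃
            omega
          | inr w =>
            rw [← hz] at hz''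
            simp only [Mle] at hz''
        | none =>
          -- v = topB c' m'
          rcases fibE_le_topB_inv h₀ with ⟨rfl, rfl⟩ | ⟨v₀, w, hz, _, _, _, _⟩ |
              ⟨k'', j, _, _, hcq, hc', hm'⟩ | ⟨k'', s, j, _, _, hcs, hc', hm'⟩
          · exact P1le_refl _
          · exact absurd hz (by simp)
          · obtain ⟨k₂, hk₂, hge₂⟩ := hK (j + 1)
            rcases fibE_le_topB_inv (hv _ ⟨k₂, hk₂, rfl⟩) with ⟨rfl, rfl⟩ |
                ⟨v₀, w, hz₂, _, _, _, _⟩ | ⟨k₃, j₂, hz₂, hle₂, _, hc'₂, _⟩ |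
                ⟨k₃, s₂, j₂, _, _, hcs₂, _, _⟩
            · exact P1le_refl _
            · exact absurd hz₂ (by simp)
            · obtain rfl : k₂ = k₃ := by simpa using hz₂
              have hj : word1 j = word1 j₂ := hif.finj q (hc'.symm.trans hc'₂)
              have := word1_inj hj
              omega
            · have h1 : q.1.2 < f q s₂ := hif.gt q _ (hif.mem q s₂)
              omega
          · have h1 : q.1.2 < f q s := hif.gt q _ (hif.mem q s)
            obtain ⟨k₂, hk₂, hge₂⟩ := hK (j + 1)
            rcases fibE_le_topB_inv (hv _ ⟨k₂, hk₂, rfl⟩) with ⟨rfl, rfl⟩ |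
                ⟨v₀, w, hz₂, _, _, _, _⟩ | ⟨k₃, j₂, hz₂, hle₂, hcq₂, _, _⟩ |
                ⟨k₃, s₂, j₂, hz₂, hle₂, hcs₂, hc'₂, _⟩
            · exact P1le_refl _
            · exact absurd hz₂ (by simp)
            · omega
            · obtain rfl : k₂ = k₃ := by simpa using hz₂
              obtain rfl : s = s₂ := hif.finj q (hcs.symm.trans hcs₂)
              have hj : wordSnoc s j = wordSnoc s j₂ := hif.finj q (hc'.symm.trans hc'₂)
              have := (wordSnoc_inj hj).2
              omega
      · exact P1le_top _

lemma lub_word {i : Pairt → Set ℕ} (hif : IFData i f) {c m : ℕ} {q : Pairt}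
    (V : ℕ → NWord) (hmono : ∀ n, wordLE (V n) (V (n + 1)))
    (hlen : ∀ n, (V n).1.length < (V (n + 1)).1.length) :
    DirectedOn' (P1le f) {d | ∃ n, d = fibE c m q (Sum.inr (V n))} ∧
    IsLub' (P1le f) {d | ∃ n, d = fibE c m q (Sum.inr (V n))} (topB c m) := by
  have hchain : ∀ a b, a ≤ b → wordLE (V a) (V b) := by
    intro a b hab
    induction b, hab using Nat.le_induction with
    | base => exact wordLE_rfl
    | succ b hab ih => exact wordLE_trans ih (hmono b)
  have hgrow : ∀ n, n ≤ (V n).1.length := by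
    intro n
    induction n with
    | zero => omega
    | succ n ih => have := hlen n; omega
  constructor
  · constructor
    · exact ⟨_, ⟨0, rfl⟩⟩
    · rintro x ⟨n₁, rfl⟩ y ⟨n₂, rfl⟩
      refine ⟨fibE c m q (Sum.inr (V (max n₁ n₂))), ⟨max n₁ n₂, rfl⟩, ?_, ?_⟩
      · exact fibE_mono (hchain _ _ (le_max_left _ _))
      · exact fibE_mono (hchain _ _ (le_max_right _ _))
  · constructor
    · rintro x ⟨n, rfl⟩
      exact fibE_le_topB
    · intro v hv
      have h₀ := hv _ ⟨0, rfl⟩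
      rcases v with ⟨g, n⟩ | ⟨c', m', ℓ⟩ | v
      · exact (fibE_le_inl h₀).elim
      · cases ℓ with
        | some pz =>
          exfalso
          obtain ⟨q', z'⟩ := pz
          obtain ⟨z'', hz'', hEq⟩ := le_fibE_inv h₀
          obtain ⟨rfl, rfl, rfl, hz⟩ := fibE_inj hEq
          rw [← hz] at hz''
          cases z' with
          | inl j => simp only [Mle] at hz''
          | inr w =>
            obtain ⟨z₃, hz₃, hEq₂⟩ := le_fibE_inv (hv _ ⟨w.1.length + 1, rfl⟩)
            obtain ⟨_, _, _, hz₄⟩ := fibE_inj hEq₂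
            rw [← hz₄] at hz₃
            simp only [Mle] at hz₃
            have h1 := wordLE_length hz₃
            have h2 := hgrow (w.1.length + 1)
            omega
        | none =>
          rcases fibE_le_topB_inv h₀ with ⟨rfl, rfl⟩ | ⟨v₀, w, hz, hvw, hcq, hc', hm'⟩ |
              ⟨k'', j, hz, _, _, _, _⟩ | ⟨k'', s, j, hz, _, _, _, _⟩
          · exact P1le_refl _
          · rcases fibE_le_topB_inv (hv _ ⟨w.1.length + 1, rfl⟩) with ⟨rfl, rfl⟩ |
                ⟨v₁, w₂, hz₂, hvw₂, _, hc'₂, _⟩ | ⟨k₃, j₂, hz₂, _, _, _, _⟩ |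
                ⟨k₃, s₂, j₂, hz₂, _, _, _, _⟩
            · exact P1le_refl _
            · obtain rfl : V (w.1.length + 1) = v₁ := by simpa using hz₂
              obtain rfl : w = w₂ := hif.finj q (hc'.symm.trans hc'₂)
              have h1 := wordLE_length hvw₂
              have h2 := hgrow (w.1.length + 1)
              omega
            · exact absurd hz₂ (by simp)
            · exact absurd hz₂ (by simp)
          · exact absurd hz (by simp)
          · exact absurd hz (by simp)
      · exact P1le_top _

lemma lub_gchain (g : ℕ → ℕ) :
    DirectedOn' (P1le f) {d | ∃ n, d = (Sum.inl (g, n) : P1t)} ∧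
    IsLub' (P1le f) {d | ∃ n, d = (Sum.inl (g, n) : P1t)} P1top := by
  constructor
  · constructor
    · exact ⟨_, ⟨0, rfl⟩⟩
    · rintro x ⟨n₁, rfl⟩ y ⟨n₂, rfl⟩
      exact ⟨Sum.inl (g, max n₁ n₂), ⟨max n₁ n₂, rfl⟩,
        inl_mono (le_max_left _ _), inl_mono (le_max_right _ _)⟩
  · constructor
    · rintro x ⟨n, rfl⟩
      exact P1le_top _
    · intro v hv
      rcases v with ⟨h, n₀⟩ | ⟨c', m', ℓ⟩ | v
      · obtain ⟨k, hk, hEq⟩ := le_inl_inv (hv _ ⟨n₀ + 1, rfl⟩)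
        obtain ⟨_, h2⟩ : g = h ∧ n₀ + 1 = k := by simpa using hEq
        omega
      · cases ℓ with
        | some pz =>
          obtain ⟨q, z⟩ := pz
          exact (inl_le_fibE (hv _ ⟨0, rfl⟩)).elim
        | none =>
          have := (inl_le_topB_inv (hv _ ⟨m' + 1, rfl⟩)).1
          omega
      · exact P1le_refl _

end AuxDev4


section AuxDev5
open Sum

variable {f : Pairt → NWord → ℕ}

lemma wordLT_length {a b : NWord} (h : wordLE a b) (hne : b ≠ a) :
    a.1.length < b.1.length := by
  rcases lt_or_eq_of_le (wordLE_length h) with h' | h'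
  · exact h'
  · exact absurd (Subtype.ext (List.IsPrefix.eq_of_length h h')).symm hne

end AuxDev5


/-- The Scott space `ΣP₁` of the dcpo `P₁ = (ℕ^ℕ × ℕ) ∪ B ∪ {⊤₁}` is sober. -/
theorem P1_scott_sober (i : Pairt → Set ℕ) (f : Pairt → NWord → ℕ) (hif : IFData i f) :
    SoberRel (P1le f) := by
  classical
  constructor
  · -- T₀
    intro x y h
    have h1 : P1le f x y := by
      by_contra hxy
      exact (h _ (open_compl (closed_down (f := f) y))).mp hxy (P1le_refl y)
    have h2 : P1le f y x := by
      by_contra hxy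
      exact (h _ (open_compl (closed_down (f := f) x))).mpr hxy (P1le_refl x)
    exact P1le_antisymm h1 h2
  · intro C hC hne hirr
    have hex : ∃ x, C = {y | P1le f y x} := by
      by_cases htop : P1top ∈ C
      · exact ⟨P1top, Set.ext fun y =>
          ⟨fun _ => P1le_top y, fun _ => hC.1 y P1top (P1le_top y) htop⟩⟩
      by_cases hmax : ∃ x₀ ∈ C, (∀ c' m', x₀ ≠ topB c' m') ∧ ∀ y ∈ C, P1le f x₀ y → y = x₀
      · -- a maximal non-top element exists
        obtain ⟨x₀, hx₀, hnt, hm⟩ := hmax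
        have hopen : ScottOpen' (P1le f) (Cᶜ ∪ {x₀}) := by
          constructor
          · rintro x y hxy (hx | hx)
            · exact Or.inl (fun hyC => hx (hC.1 x y hxy hyC))
            · simp only [Set.mem_singleton_iff] at hx
              subst hx
              by_cases hyC : y ∈ C
              · exact Or.inr (by simp [hm y hyC hxy])
              · exact Or.inl hyC
          · intro D u hD hu hmem
            by_cases hDC : ∀ d ∈ D, d ∈ C
            · have huC : u ∈ C := hC.2 D u hDC hD hu
              have hux : u = x₀ := by
                rcases hmem with h | h
                · exact absurd huC h
                · simpa using h
              subst hux
              have huD : u ∈ D := by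
                by_contra hnD
                rcases L0 hD hu hnD with rfl | ⟨c', m', rfl⟩
                · exact htop huC
                · exact hnt c' m' rfl
              exact ⟨u, huD, Or.inr rfl⟩
            · push_neg at hDC
              obtain ⟨d, hd, hdC⟩ := hDC
              exact ⟨d, hd, Or.inl hdC⟩
        have hcover : C ⊆ {y | P1le f y x₀} ∪ (C \ (Cᶜ ∪ {x₀})) := by
          intro z hz
          by_cases hzU : z ∈ (Cᶜ ∪ {x₀})
          · rcases hzU with h | h
            · exact absurd hz h
            · simp only [Set.mem_singleton_iff] at h
              subst h
              exact Or.inl (P1le_refl z)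
          · exact Or.inr ⟨hz, hzU⟩
        rcases hirr _ _ (closed_down x₀) (closed_diff hC hopen) hcover with hsub | hsub
        · exact ⟨x₀, Set.ext fun y => ⟨fun hy => hsub hy, fun hy => hC.1 y x₀ hy hx₀⟩⟩
        · exact absurd (Or.inr rfl) (hsub hx₀).2
      · -- no maximal non-top element: climb to top elements
        push_neg at hmax
        have hcov : ∀ x ∈ C, ∃ c m, topB c m ∈ C ∧ P1le f x (topB c m) := by
          intro x hx
          rcases x with ⟨g, k⟩ | ⟨c, m, ℓ⟩ | x
          · -- F element
            have hbdd : ¬ ∀ n, (Sum.inl (g, n) : P1t) ∈ C := by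
              intro hall
              obtain ⟨hdir, hlub⟩ := lub_gchain (f := f) g
              exact htop (hC.2 _ _ (by rintro d ⟨n, rfl⟩; exact hall n) hdir hlub)
            push_neg at hbdd
            obtain ⟨n₀, hn₀⟩ := hbdd
            have hltn : ∀ n, (Sum.inl (g, n) : P1t) ∈ C → n < n₀ := by
              intro n hn
              by_contra hge
              exact hn₀ (hC.1 _ _ (inl_mono (by omega)) hn)
            set P : ℕ → Prop := fun n => (Sum.inl (g, n) : P1t) ∈ C with hP
            have hPk : P k := hx
            have hkle : k ≤ n₀ := le_of_lt (hltn k hx)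
            have hn'C : P (Nat.findGreatest P n₀) := Nat.findGreatest_spec hkle hPk
            have hn'max : ∀ j, P j → j ≤ Nat.findGreatest P n₀ := fun j hj =>
              Nat.le_findGreatest (le_of_lt (hltn j hj)) hj
            obtain ⟨y, hyC, hyle, hyne⟩ := hmax _ hn'C (by
              intro c' m'
              simp [topB, P1ofB])
            rcases hyle with heq | hlty
            · exact absurd heq.symm hyne
            rcases p1lt_inl_src hlty with ⟨m', hm', rfl⟩ | ⟨m', hm', rfl⟩ | rfl
            · have := hn'max m' hyC
              omega
            · exact ⟨g m', m', hyC, inl_le_topB (le_trans (hn'max k hPk) hm')⟩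
            · exact absurd hyC htop
          · cases ℓ with
            | none => exact ⟨c, m, hx, P1le_refl _⟩
            | some pz =>
              obtain ⟨q, z⟩ := pz
              by_cases htb : topB c m ∈ C
              · exact ⟨c, m, htb, fibE_le_topB⟩
              cases z with
              | inl k =>
                have hKbdd : ¬ ∀ n, ∃ j, n ≤ j ∧ fibE c m q (Sum.inl j) ∈ C := by
                  intro hall
                  obtain ⟨hdir, hlub⟩ := lub_inl hif (c := c) (m := m) (q := q)
                    {j | fibE c m q (Sum.inl j) ∈ C}
                    (fun n => by obtain ⟨j, h1, h2⟩ := hall n; exact ⟨j, h2, h1⟩)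
                  exact htb (hC.2 _ _ (by rintro d ⟨j, hj, rfl⟩; exact hj) hdir hlub)
                push_neg at hKbdd
                obtain ⟨n₀, hn₀⟩ := hKbdd
                set P : ℕ → Prop := fun j => fibE c m q (Sum.inl j) ∈ C with hP
                have hPk : P k := hx
                have hbnd : ∀ j, P j → j ≤ n₀ := by
                  intro j hj
                  by_contra hgt
                  exact hn₀ j (by omega) hj
                have hjC : P (Nat.findGreatest P n₀) := Nat.findGreatest_spec (hbnd k hPk) hPk
                have hjmax : ∀ j, P j → j ≤ Nat.findGreatest P n₀ := fun j hj =>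
                  Nat.le_findGreatest (hbnd j hj) hj
                obtain ⟨y, hyC, hyle, hyne⟩ := hmax _ hjC (by
                  intro c' m'
                  simp [fibE, topB, P1ofB])
                rcases fibE_src_inv hyle with heq | ⟨z', hmlt, rfl⟩ | rfl |
                    ⟨v', w', hz, _, _, rfl⟩ | ⟨k₂, j₂, hz, hlej, hcq, rfl⟩ |
                    ⟨k₂, s, j₂, hz, hlej, hcs, rfl⟩ | rfl
                · exact absurd heq hyne
                · exfalso
                  obtain ⟨b, hb, hble⟩ := Mle_inl_inv hmlt.1
                  subst hb
                  have := hjmax b hyC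
                  have : Sum.inl (Nat.findGreatest P n₀) = (Sum.inl b : Mt) := by
                    congr 1
                    omega
                  exact hmlt.2 this
                · exact absurd hyC htb
                · exact absurd hz (by simp)
                · exact ⟨f q (word1 j₂), m + 1, hyC,
                    P1le_trans (fibE_mono (by simp only [Mle]; exact hjmax k hPk)) hyle⟩
                · exact ⟨f q (wordSnoc s j₂), m, hyC,
                    P1le_trans (fibE_mono (by simp only [Mle]; exact hjmax k hPk)) hyle⟩
                · exact absurd hyC htop
              | inr v =>
                by_cases hext : ∃ v', wordLE v v' ∧ fibE c m q (Sum.inr v') ∈ C ∧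
                    ∀ v'', wordLE v' v'' → fibE c m q (Sum.inr v'') ∈ C → v'' = v'
                · obtain ⟨vm, hvvm, hvmC, hvmmax⟩ := hext
                  obtain ⟨y, hyC, hyle, hyne⟩ := hmax _ hvmC (by
                    intro c' m'
                    simp [fibE, topB, P1ofB])
                  rcases fibE_src_inv hyle with heq | ⟨z', hmlt, rfl⟩ | rfl |
                      ⟨v', w', hz, hvw, hcq, rfl⟩ | ⟨k₂, j₂, hz, _, _, rfl⟩ |
                      ⟨k₂, s, j₂, hz, _, _, rfl⟩ | rfl
                  · exact absurd heq hyne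
                  · exfalso
                    obtain ⟨w, hw, hwle⟩ := Mle_inr_inv hmlt.1
                    subst hw
                    have := hvmmax w hwle hyC
                    subst this
                    exact hmlt.2 rfl
                  · exact absurd hyC htb
                  · exact ⟨f q w', m + 1, hyC,
                      P1le_trans (fibE_mono (by simp only [Mle]; exact hvvm)) hyle⟩
                  · exact absurd hz (by simp)
                  · exact absurd hz (by simp)
                  · exact absurd hyC htop
                · exfalso
                  push_neg at hext
                  have hstep : ∀ s : {w : NWord // wordLE v w ∧ fibE c m q (Sum.inr w) ∈ C},
                      ∃ t : {w : NWord // wordLE v w ∧ fibE c m q (Sum.inr w) ∈ C},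
                        wordLE s.1 t.1 ∧ t.1 ≠ s.1 := by
                    rintro ⟨w, hw1, hw2⟩
                    obtain ⟨w', h1, h2, h3⟩ := hext w hw1 hw2
                    exact ⟨⟨w', wordLE_trans hw1 h1, h2⟩, h1, h3⟩
                  choose step hstep1 hstep2 using hstep
                  set V' : ℕ → {w : NWord // wordLE v w ∧ fibE c m q (Sum.inr w) ∈ C} :=
                    fun n => step^[n] ⟨v, wordLE_rfl, hx⟩ with hV'
                  have hV'succ : ∀ n, V' (n + 1) = step (V' n) := fun n =>
                    Function.iterate_succ_apply' step n _
                  obtain ⟨hdir, hlub⟩ := lub_word hif (c := c) (m := m) (q := q)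
                    (fun n => (V' n).1)
                    (fun n => by
                      show wordLE (V' n).1 (V' (n + 1)).1
                      rw [hV'succ]
                      exact hstep1 _)
                    (fun n => by
                      show (V' n).1.1.length < (V' (n + 1)).1.1.length
                      rw [hV'succ]
                      exact wordLT_length (hstep1 (V' n)) (hstep2 (V' n)))
                  exact htb (hC.2 _ _ (by rintro d ⟨n, rfl⟩; exact (V' n).2.2) hdir hlub)
          · exact absurd hx htop
        -- top elements exist and have bounded levels
        obtain ⟨x₁, hx₁⟩ := hne
        obtain ⟨c₀', m₀', ht₀', _⟩ := hcov x₁ hx₁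
        have hlev : ∃ M, ∀ c' m', topB c' m' ∈ C → m' ≤ M := by
          by_contra hunb
          push_neg at hunb
          set g : ℕ → ℕ := fun n => if h : ∃ c', topB c' n ∈ C then h.choose else 0 with hg
          have hgmem : ∀ n c', topB c' n ∈ C → topB (g n) n ∈ C := by
            intro n c' hmem
            have hex2 : ∃ c'', topB c'' n ∈ C := ⟨c', hmem⟩
            have hgn : g n = hex2.choose := by
              simp only [hg]
              rw [dif_pos hex2]
            rw [hgn]
            exact hex2.choose_spec
          have hallg : ∀ n, (Sum.inl (g, n) : P1t) ∈ C := by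
            intro n
            obtain ⟨c', m', hmem, hlt⟩ := hunb n
            exact hC.1 _ _ (inl_le_topB (le_of_lt hlt)) (hgmem m' c' hmem)
          obtain ⟨hdir, hlub⟩ := lub_gchain (f := f) g
          exact htop (hC.2 _ _ (by rintro d ⟨n, rfl⟩; exact hallg n) hdir hlub)
        obtain ⟨M₀, hM₀⟩ := hlev
        obtain ⟨cM, M, htM, hMmax⟩ : ∃ cM M, topB cM M ∈ C ∧
            ∀ c' m', topB c' m' ∈ C → m' ≤ M := by
          set Q : ℕ → Prop := fun m' => ∃ c', topB c' m' ∈ C with hQ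
          have hQ0 : Q m₀' := ⟨c₀', ht₀'⟩
          have h1 : Q (Nat.findGreatest Q M₀) :=
            Nat.findGreatest_spec (hM₀ _ _ ht₀') hQ0
          obtain ⟨cM, hcM⟩ := h1
          exact ⟨cM, Nat.findGreatest Q M₀, hcM,
            fun c' m' hmem => Nat.le_findGreatest (hM₀ _ _ hmem) ⟨c', hmem⟩⟩
        by_cases hsing : ∀ c' m', topB c' m' ∈ C → c' = cM ∧ m' = M
        · refine ⟨topB cM M, Set.ext fun y => ⟨fun hy => ?_, fun hy => hC.1 _ _ hy htM⟩⟩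
          obtain ⟨c', m', hmem, hle⟩ := hcov y hy
          obtain ⟨rfl, rfl⟩ := hsing c' m' hmem
          exact hle
        · exfalso
          push_neg at hsing
          obtain ⟨c₁, m₁, ht₁, hne₁⟩ := hsing
          have hdiff : ¬ (c₁ = cM ∧ m₁ = M) := fun ⟨ha, hb⟩ => hne₁ ha hb
          by_cases hA : ∃ c' m', topB c' m' ∈ C ∧
            ¬ ((∃ q : Pairt, c' = q.1.2 ∧
                  ∀ n, ∃ j, n ≤ j ∧ topB (f q (word1 j)) (m' + 1) ∈ C) ∨
               (∃ (q : Pairt) (s : NWord), c' = f q s ∧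
                  ∀ n, ∃ j, n ≤ j ∧ topB (f q (wordSnoc s j)) m' ∈ C) ∨
               (∃ q : Pairt, c' = q.1.1 ∧
                  ∀ n, ∃ v' w', n ≤ v'.1.length ∧ wordLE v' w' ∧
                    topB (f q w') (m' + 1) ∈ C))
          · -- an unforced top element exists
            obtain ⟨c', m', htmem, hnF⟩ := hA
            set Bset : Set P1t := {x | ∃ c'' m'', topB c'' m'' ∈ C ∧
              ¬(c'' = c' ∧ m'' = m') ∧ P1le f x (topB c'' m'')} with hBdef
            have hBsubC : Bset ⊆ C := by
              rintro x ⟨c'', m'', hmem, _, hle⟩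
              exact hC.1 _ _ hle hmem
            have hBclosed : ScottClosed' (P1le f) Bset := by
              constructor
              · rintro x y hxy ⟨c'', m'', hmem, hnk, hle⟩
                exact ⟨c'', m'', hmem, hnk, P1le_trans hxy hle⟩
              · intro D u hsub hD hu
                by_cases huD : u ∈ D
                · exact hsub huD
                have huC : u ∈ C := hC.2 D u (fun d hd => hBsubC (hsub hd)) hD hu
                rcases L0 hD hu huD with rfl | ⟨c₂, m₂, rfl⟩
                · exact absurd huC htop
                by_cases hsame : c₂ = c' ∧ m₂ = m'
                · exfalso
                  obtain ⟨rfl, rfl⟩ := hsame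
                  obtain ⟨q, hfib⟩ := L1 hD hu huD
                  have hDinf : D.Infinite := by
                    intro hfin
                    exact huD (lub_mem_of_finite hD hfin hu)
                  have hsubim : D ⊆ (fun z => fibE c₂ m₂ q z) '' {z | fibE c₂ m₂ q z ∈ D} := by
                    intro d hd
                    obtain ⟨z, rfl⟩ := hfib d hd
                    exact ⟨z, hd, rfl⟩
                  have hZinf : {z | fibE c₂ m₂ q z ∈ D}.Infinite := by
                    intro hfin
                    exact hDinf (Set.Finite.subset (Set.Finite.image _ hfin) hsubim)
                  have hsplit : {k : ℕ | fibE c₂ m₂ q (Sum.inl k) ∈ D}.Infinite ∨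
                      {v : NWord | fibE c₂ m₂ q (Sum.inr v) ∈ D}.Infinite := by
                    by_contra hboth
                    push_neg at hboth
                    obtain ⟨hb1, hb2⟩ := hboth
                    refine hZinf (Set.Finite.subset
                      (Set.Finite.union (Set.Finite.image Sum.inl hb1)
                        (Set.Finite.image Sum.inr hb2)) ?_)
                    intro z hz
                    cases z with
                    | inl k => exact Or.inl ⟨k, hz, rfl⟩
                    | inr w => exact Or.inr ⟨w, hz, rfl⟩
                  have hroutes : ∀ k, fibE c₂ m₂ q (Sum.inl k) ∈ D →
                      (∃ j, k ≤ j ∧ c₂ = q.1.2 ∧ topB (f q (word1 j)) (m₂ + 1) ∈ C) ∨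
                      (∃ s j, k ≤ j ∧ c₂ = f q s ∧ topB (f q (wordSnoc s j)) m₂ ∈ C) := by
                    intro k hk
                    obtain ⟨c₃, m₃, hmem₃, hne₃, hle₃⟩ := hsub hk
                    rcases fibE_le_topB_inv hle₃ with ⟨h1, h2⟩ | ⟨v₀, w, hz, _, _, _, _⟩ |
                        ⟨k₂, j, hz, hlej, hcq, hc₃, hm₃⟩ | ⟨k₂, s, j, hz, hlej, hcs, hc₃, hm₃⟩
                    · exact absurd ⟨h1.symm, h2.symm⟩ hne₃
                    · exact absurd hz (by simp)
                    · obtain rfl : k = k₂ := by simpa using hz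
                      subst hc₃; subst hm₃
                      exact Or.inl ⟨j, hlej, hcq, hmem₃⟩
                    · obtain rfl : k = k₂ := by simpa using hz
                      subst hc₃; subst hm₃
                      exact Or.inr ⟨s, j, hlej, hcs, hmem₃⟩
                  have hwroute : ∀ v', fibE c₂ m₂ q (Sum.inr v') ∈ D →
                      ∃ w', wordLE v' w' ∧ c₂ = q.1.1 ∧ topB (f q w') (m₂ + 1) ∈ C := by
                    intro v' hv'
                    obtain ⟨c₃, m₃, hmem₃, hne₃, hle₃⟩ := hsub hv'
                    rcases fibE_le_topB_inv hle₃ with ⟨h1, h2⟩ |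
                        ⟨v₀, w, hz, hvw, hcq, hc₃, hm₃⟩ |
                        ⟨k₂, j, hz, _, _, _, _⟩ | ⟨k₂, s, j, hz, _, _, _, _⟩
                    · exact absurd ⟨h1.symm, h2.symm⟩ hne₃
                    · obtain rfl : v' = v₀ := by simpa using hz
                      subst hc₃; subst hm₃
                      exact ⟨w, hvw, hcq, hmem₃⟩
                    · exact absurd hz (by simp)
                    · exact absurd hz (by simp)
                  rcases hsplit with hinf | hinf
                  · by_cases hcq : c₂ = q.1.2
                    · refine hnF (Or.inl ⟨q, hcq, ?_⟩)
                      intro n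
                      obtain ⟨k, hkD, hkn⟩ := nat_unbounded_of_infinite hinf n
                      rcases hroutes k hkD with ⟨j, hkj, _, hmem⟩ | ⟨s, j, _, hcs, _⟩
                      · exact ⟨j, by omega, hmem⟩
                      · exact absurd hcs (by
                          have := hif.gt q _ (hif.mem q s)
                          omega)
                    · obtain ⟨k₀, hk₀D, _⟩ := nat_unbounded_of_infinite hinf 0
                      rcases hroutes k₀ hk₀D with ⟨j, _, hcq', _⟩ | ⟨s, j, _, hcs, _⟩
                      · exact hcq hcq'
                      · refine hnF (Or.inr (Or.inl ⟨q, s, hcs, ?_⟩))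
                        intro n
                        obtain ⟨k, hkD, hkn⟩ := nat_unbounded_of_infinite hinf n
                        rcases hroutes k hkD with ⟨j₂, _, hcq', _⟩ |
                            ⟨s₂, j₂, hkj₂, hcs₂, hmem₂⟩
                        · exact absurd hcq' hcq
                        · obtain rfl : s = s₂ := hif.finj q (hcs.symm.trans hcs₂)
                          exact ⟨j₂, by omega, hmem₂⟩
                  · have hcomp : ∀ v₁ v₂, fibE c₂ m₂ q (Sum.inr v₁) ∈ D →
                        fibE c₂ m₂ q (Sum.inr v₂) ∈ D → wordLE v₁ v₂ ∨ wordLE v₂ v₁ := by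
                      intro v₁ v₂ h1 h2
                      obtain ⟨w, hw, hle1, hle2⟩ := hD.2 _ h1 _ h2
                      obtain ⟨z₃, rfl⟩ := hfib w hw
                      obtain ⟨z₄, hz₄, hEq⟩ := le_fibE_inv hle1
                      obtain ⟨_, _, _, hz₅⟩ := fibE_inj hEq
                      rw [← hz₅] at hz₄
                      obtain ⟨w₃, rfl, hle₃⟩ := Mle_inr_inv hz₄
                      obtain ⟨z₆, hz₆, hEq₂⟩ := le_fibE_inv hle2
                      obtain ⟨_, _, _, hz₇⟩ := fibE_inj hEq₂
                      rw [← hz₇] at hz₆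
                      obtain ⟨w₄, hEq₃, hle₄⟩ := Mle_inr_inv hz₆
                      obtain rfl : w₃ = w₄ := by simpa using hEq₃
                      exact wordLE_comparable hle₃ hle₄
                    have hlens : ∀ n, ∃ v', fibE c₂ m₂ q (Sum.inr v') ∈ D ∧
                        n ≤ v'.1.length := by
                      intro n
                      by_contra hbd
                      push_neg at hbd
                      have hinj : Set.InjOn (fun v' : NWord => v'.1.length)
                          {v' | fibE c₂ m₂ q (Sum.inr v') ∈ D} := by
                        intro a ha b hb hab
                        rcases hcomp a b ha hb with h | h
                        · exact Subtype.ext (List.IsPrefix.eq_of_length h hab)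
                        · exact (Subtype.ext (List.IsPrefix.eq_of_length h hab.symm)).symm
                      refine hinf (Set.Finite.of_finite_image
                        (Set.Finite.subset (Set.finite_Iio n) ?_) hinj)
                      rintro L ⟨v', hv', rfl⟩
                      exact hbd v' hv'
                    obtain ⟨v₀, hv₀D, _⟩ := hlens 0
                    obtain ⟨w₀, _, hcq, _⟩ := hwroute v₀ hv₀D
                    refine hnF (Or.inr (Or.inr ⟨q, hcq, ?_⟩))
                    intro n
                    obtain ⟨v', hv'D, hv'len⟩ := hlens n
                    obtain ⟨w', hw1, _, hw3⟩ := hwroute v' hv'D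
                    exact ⟨v', w', hv'len, hw1, hw3⟩
                · exact ⟨c₂, m₂, huC, hsame, P1le_refl _⟩
            have hcover : C ⊆ {y | P1le f y (topB c' m')} ∪ Bset := by
              intro x hx
              obtain ⟨c₂, m₂, hmem₂, hle₂⟩ := hcov x hx
              by_cases hsame : c₂ = c' ∧ m₂ = m'
              · obtain ⟨rfl, rfl⟩ := hsame
                exact Or.inl hle₂
              · exact Or.inr ⟨c₂, m₂, hmem₂, hsame, hle₂⟩
            rcases hirr _ _ (closed_down _) hBclosed hcover with hsub | hsub
            · by_cases hd1 : c₁ = c' ∧ m₁ = m'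
              · obtain ⟨rfl, rfl⟩ := hd1
                have h := topB_le_topB (hsub htM)
                exact hdiff ⟨h.1.symm, h.2.symm⟩
              · have h := topB_le_topB (hsub ht₁)
                exact hd1 ⟨h.1, h.2⟩
            · obtain ⟨c₂, m₂, _, hne₂, hle₂⟩ := hsub htmem
              exact hne₂ ⟨(topB_le_topB hle₂).1.symm, (topB_le_topB hle₂).2.symm⟩
          · -- every top element is forced
            push_neg at hA
            have hFM := hA cM M htM
            rcases hFM with ⟨q, _, hprem⟩ | ⟨q, s, hcs, hprem⟩ | ⟨q, _, hprem⟩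
            · obtain ⟨j, _, hmem⟩ := hprem 0
              have := hMmax _ _ hmem
              omega
            · obtain ⟨j₀, _, hj₀⟩ := hprem 0
              obtain ⟨j₁, hj₁ge, hj₁⟩ := hprem (j₀ + 1)
              set Kp : ℕ → ℕ → ℕ → Prop := fun jε c'' m'' =>
                m'' = M ∧ ∃ w, wordLE (wordSnoc s jε) w ∧ c'' = f q w with hKp
              set Aset : ℕ → Set P1t := fun jε =>
                {x | ∃ c'' m'', topB c'' m'' ∈ C ∧ ¬ Kp jε c'' m'' ∧
                  P1le f x (topB c'' m'')} with hAs
              have hAsubC : ∀ jε, Aset jε ⊆ C := by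
                rintro jε x ⟨c'', m'', hmem, _, hle⟩
                exact hC.1 _ _ hle hmem
              have hAclosed : ∀ jε, ScottClosed' (P1le f) (Aset jε) := by
                intro jε
                constructor
                · rintro x y hxy ⟨c'', m'', hmem, hnk, hle⟩
                  exact ⟨c'', m'', hmem, hnk, P1le_trans hxy hle⟩
                · intro D u hsubD hD hu
                  by_cases huD : u ∈ D
                  · exact hsubD huD
                  have huC : u ∈ C := hC.2 D u (fun d hd => (hAsubC jε) (hsubD hd)) hD hu
                  rcases L0 hD hu huD with rfl | ⟨c₂, m₂, rfl⟩
                  · exact absurd huC htop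
                  by_cases hk : Kp jε c₂ m₂
                  · exfalso
                    obtain ⟨hm₂, w_u, hwu, hcu⟩ := hk
                    subst hm₂
                    obtain ⟨q', hfib⟩ := L1 hD hu huD
                    obtain ⟨d₀, hd₀⟩ := hD.1
                    obtain ⟨z₀, rfl⟩ := hfib d₀ hd₀
                    obtain ⟨c₃, m₃, hmem₃, hnk₃, hle₃⟩ := hsubD hd₀
                    rcases fibE_le_topB_inv hle₃ with ⟨h1, h2⟩ |
                        ⟨v₀, w, hz, hvw, hcq', hc₃, hm₃'⟩ |
                        ⟨k₂, j, hz, hlej, hcq', hc₃, hm₃'⟩ |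
                        ⟨k₂, s₂, j, hz, hlej, hcs₂, hc₃, hm₃'⟩
                    · refine hnk₃ ?_
                      rw [← h1, ← h2]
                      exact ⟨rfl, w_u, hwu, hcu⟩
                    · subst hm₃'
                      have := hMmax _ _ hmem₃
                      omega
                    · subst hm₃'
                      have := hMmax _ _ hmem₃
                      omega
                    · have hq : q' = q := by
                        by_contra hqq
                        have hdisj := hif.disj q' q hqq
                        have hm1 : c₂ ∈ i q' := hcs₂ ▸ hif.mem q' s₂
                        have hm2 : c₂ ∈ i q := hcu ▸ hif.mem q w_u
                        have : c₂ ∈ i q' ∩ i q := ⟨hm1, hm2⟩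
                        rw [hdisj] at this
                        exact this
                      subst hq
                      obtain rfl : s₂ = w_u := hif.finj q' (hcs₂.symm.trans hcu)
                      refine hnk₃ ⟨hm₃', ?_⟩
                      exact ⟨wordSnoc s₂ j, wordLE_trans hwu wordLE_snoc, hc₃⟩
                  · exact ⟨c₂, m₂, huC, hk, P1le_refl _⟩
              have hcover : C ⊆ Aset j₀ ∪ Aset j₁ := by
                intro x hx
                obtain ⟨c₂, m₂, hmem₂, hle₂⟩ := hcov x hx
                by_cases h0 : Kp j₀ c₂ m₂
                · refine Or.inr ⟨c₂, m₂, hmem₂, ?_, hle₂⟩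
                  rintro ⟨hm₂, w₁, hw₁, hcw₁⟩
                  obtain ⟨_, w₂, hw₂, hcw₂⟩ := h0
                  obtain rfl : w₁ = w₂ := hif.finj q (hcw₁.symm.trans hcw₂)
                  rcases wordLE_comparable hw₂ hw₁ with h | h
                  · have := wordSnoc_le_snoc h
                    omega
                  · have := wordSnoc_le_snoc h
                    omega
                · exact Or.inl ⟨c₂, m₂, hmem₂, h0, hle₂⟩
              rcases hirr _ _ (hAclosed j₀) (hAclosed j₁) hcover with hsub | hsub
              · obtain ⟨c₂, m₂, _, hnk, hle⟩ := hsub hj₀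
                obtain ⟨h1, h2⟩ := topB_le_topB hle
                exact hnk ⟨h2.symm, wordSnoc s j₀, wordLE_rfl, h1.symm⟩
              · obtain ⟨c₂, m₂, _, hnk, hle⟩ := hsub hj₁
                obtain ⟨h1, h2⟩ := topB_le_topB hle
                exact hnk ⟨h2.symm, wordSnoc s j₁, wordLE_rfl, h1.symm⟩
            · obtain ⟨v', w', _, _, hmem⟩ := hprem 0
              have := hMmax _ _ hmem
              omega
    obtain ⟨x, hx⟩ := hex
    refine ⟨x, hx, ?_⟩
    intro x' hx'
    have hmx : x ∈ C := by rw [hx]; exact P1le_refl x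
    have hmx' : x' ∈ C := by rw [hx']; exact P1le_refl x'
    have e1 : P1le f x x' := by rw [hx'] at hmx; exact hmx
    have e2 : P1le f x' x := by rw [hx] at hmx'; exact hmx'
    exact P1le_antisymm e2 e1
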